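/- Let ⟨N, M0⟩ be a marked Petri net with a basis partition π = (T_E, T_I), and let M be a marking. Then M ∈ R(N, M0) if and only if there exists a minimax basis marking M_b ∈ M_BM such that M ∈ R_I(M_b). -/

import Mathlib

open scoped BigOperators

/-- A Petri net over places `P` and transitions `T`. -/
structure PetriNet (P T : Type) where
  Pre : P → T → ℕ
  Post : P → T → ℕ

namespace PetriNet

variable {P T : Type}

/-- Incidence matrix `C = Post − Pre` (integer valued). -/
def C (N : PetriNet P T) (p : P) (t : T) : ℤ :=
  (N.Post p t : ℤ) - (N.Pre p t : ℤ)

/-- A transition `t` is enabled at marking `M`. -/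
def Enabled (N : PetriNet P T) (M : P → ℕ) (t : T) : Prop :=
  ∀ p, N.Pre p t ≤ M p

/-- `Fires N M σ M'` means the sequence `σ` is enabled at `M` and its firing
yields `M'`, i.e. `M[σ⟩M'`. -/
inductive Fires (N : PetriNet P T) : (P → ℕ) → List T → (P → ℕ) → Prop
  | nil (M : P → ℕ) : Fires N M [] M
  | cons {M M' M'' : P → ℕ} {t : T} {σ : List T} :
      N.Enabled M t →
      (∀ p, M' p = M p + N.Post p t - N.Pre p t) →
      Fires N M' σ M'' →
      Fires N M (t :: σ) M''

/-- The reachability set `R(N, M0)`. -/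
def Reach (N : PetriNet P T) (M0 : P → ℕ) : Set (P → ℕ) :=
  {M | ∃ σ : List T, N.Fires M0 σ M}

/-- Arcs of the underlying directed graph on `P ⊕ T`, where only transitions
in `TI` are kept (the `TI`-induced subnet). -/
def Arc (N : PetriNet P T) (TI : Set T) : (P ⊕ T) → (P ⊕ T) → Prop
  | Sum.inl p, Sum.inr t => t ∈ TI ∧ 0 < N.Pre p t
  | Sum.inr t, Sum.inl p => t ∈ TI ∧ 0 < N.Post p t
  | _, _ => False

/-- The `TI`-induced subnet is acyclic: no directed cycle in its graph. -/
def AcyclicOn (N : PetriNet P T) (TI : Set T) : Prop :=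
  ∀ x, ¬ Relation.TransGen (N.Arc TI) x x

/-- `(TE, TI)` is a basis partition: `TE` and `TI` partition `T` and the
`TI`-induced subnet is acyclic. -/
def IsBasisPartition (N : PetriNet P T) (TE TI : Set T) : Prop :=
  (∀ t, t ∈ TE ↔ t ∉ TI) ∧ N.AcyclicOn TI

/-- Boundedness of the marked net `⟨N, M0⟩`. -/
def Bounded (N : PetriNet P T) (M0 : P → ℕ) : Prop :=
  ∃ k : ℕ, ∀ M ∈ N.Reach M0, ∀ p, M p ≤ k

/-- A marking is dead if no transition is enabled at it. -/
def Dead (N : PetriNet P T) (M : P → ℕ) : Prop :=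
  ∀ t : T, ¬ N.Enabled M t

/-- The set `Σ(M, t)` of explanations of `t` at `M`: implicit sequences whose
firing from `M` yields a marking enabling `t`. -/
def Expl (N : PetriNet P T) (TI : Set T) (M : P → ℕ) (t : T) : Set (List T) :=
  {σ | (∀ u ∈ σ, u ∈ TI) ∧ ∃ M', N.Fires M σ M' ∧ ∀ p, N.Pre p t ≤ M' p}

/-- The set `Σ_min(M, t)` of minimal explanations of `t` at `M`. -/
def ExplMin [DecidableEq T] (N : PetriNet P T) (TI : Set T) (M : P → ℕ) (t : T) :
    Set (List T) :=
  {σ | σ ∈ N.Expl TI M t ∧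
    ¬ ∃ σ' ∈ N.Expl TI M t,
      (∀ u, σ'.count u ≤ σ.count u) ∧ ∃ u, σ'.count u ≠ σ.count u}

/-- The set `Σ_max(M, t)` of maximal explanations of `t` at `M`. -/
def ExplMax [DecidableEq T] (N : PetriNet P T) (TI : Set T) (M : P → ℕ) (t : T) :
    Set (List T) :=
  {σ | σ ∈ N.Expl TI M t ∧
    ¬ ∃ σ' ∈ N.Expl TI M t,
      (∀ u, σ.count u ≤ σ'.count u) ∧ ∃ u, σ'.count u ≠ σ.count u}

/-- `Y_min(M, t)`: firing vectors of minimal explanations. -/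
def Ymin [DecidableEq T] (N : PetriNet P T) (TI : Set T) (M : P → ℕ) (t : T) :
    Set (T → ℕ) :=
  {y | ∃ σ ∈ N.ExplMin TI M t, ∀ u, σ.count u = y u}

/-- `Y_max(M, t)`: firing vectors of maximal explanations. -/
def Ymax [DecidableEq T] (N : PetriNet P T) (TI : Set T) (M : P → ℕ) (t : T) :
    Set (T → ℕ) :=
  {y | ∃ σ ∈ N.ExplMax TI M t, ∀ u, σ.count u = y u}

/-- The set of basis markings `M_B` (smallest set containing `M0` and closed
under minimal-explanation steps). -/
inductive Basis [DecidableEq T] [Fintype T] (N : PetriNet P T) (TE TI : Set T)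
    (M0 : P → ℕ) : (P → ℕ) → Prop
  | base : Basis N TE TI M0 M0
  | step {M M' : P → ℕ} {t : T} {y : T → ℕ} :
      Basis N TE TI M0 M →
      t ∈ TE →
      y ∈ N.Ymin TI M t →
      (∀ p, (M' p : ℤ) = (M p : ℤ) + (∑ u, N.C p u * y u) + N.C p t) →
      Basis N TE TI M0 M'

/-- The set of minimax basis markings `M_BM` (smallest set containing `M0` and
closed under minimal- or maximal-explanation steps). -/
inductive Minimax [DecidableEq T] [Fintype T] (N : PetriNet P T) (TE TI : Set T)
    (M0 : P → ℕ) : (P → ℕ) → Prop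
  | base : Minimax N TE TI M0 M0
  | step {M M' : P → ℕ} {t : T} {y : T → ℕ} :
      Minimax N TE TI M0 M →
      t ∈ TE →
      (y ∈ N.Ymin TI M t ∨ y ∈ N.Ymax TI M t) →
      (∀ p, (M' p : ℤ) = (M p : ℤ) + (∑ u, N.C p u * y u) + N.C p t) →
      Minimax N TE TI M0 M'

/-- The implicit reach `R_I(M_b)`: markings reachable from `M_b` by firing
only implicit transitions. -/
def ReachI (N : PetriNet P T) (TI : Set T) (Mb : P → ℕ) : Set (P → ℕ) :=
  {M | ∃ σ : List T, (∀ u ∈ σ, u ∈ TI) ∧ N.Fires Mb σ M}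

/-- One step of the minimax-BRG: `M1 ⇒ M2`. -/
def BrgStep [DecidableEq T] [Fintype T] (N : PetriNet P T) (TE TI : Set T)
    (M1 M2 : P → ℕ) : Prop :=
  ∃ t ∈ TE, ∃ y : T → ℕ, (y ∈ N.Ymin TI M1 t ∨ y ∈ N.Ymax TI M1 t) ∧
    ∀ p, (M2 p : ℤ) = (M1 p : ℤ) + (∑ u, N.C p u * y u) + N.C p t

/-- One step of the BRG using only minimal explanations. -/
def MinBrgStep [DecidableEq T] [Fintype T] (N : PetriNet P T) (TE TI : Set T)
    (M1 M2 : P → ℕ) : Prop :=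
  ∃ t ∈ TE, ∃ y ∈ N.Ymin TI M1 t,
    ∀ p, (M2 p : ℤ) = (M1 p : ℤ) + (∑ u, N.C p u * y u) + N.C p t

/-- The minimax-BRG is unobstructed: every minimax basis marking can reach, by
BRG-steps, an i-coreachable minimax basis marking. -/
def Unobstructed [DecidableEq T] [Fintype T] (N : PetriNet P T) (TE TI : Set T)
    (M0 : P → ℕ) (MF : Set (P → ℕ)) : Prop :=
  ∀ Mb, N.Minimax TE TI M0 Mb →
    ∃ Mb', Relation.ReflTransGen (N.BrgStep TE TI) Mb Mb' ∧
      N.Minimax TE TI M0 Mb' ∧ (N.ReachI TI Mb' ∩ MF).Nonempty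

/-- `Σ_I,max(M)`: maximal implicit firing sequences at `M`. -/
def ImplMax [DecidableEq T] (N : PetriNet P T) (TI : Set T) (M : P → ℕ) :
    Set (List T) :=
  {σ | (∀ u ∈ σ, u ∈ TI) ∧ (∃ M', N.Fires M σ M') ∧
    ¬ ∃ σ' : List T, (∀ u ∈ σ', u ∈ TI) ∧ (∃ M', N.Fires M σ' M') ∧
      (∀ u, σ.count u ≤ σ'.count u) ∧ ∃ u, σ'.count u ≠ σ.count u}

/-- `Y_I,max(M)`: firing vectors of maximal implicit firing sequences. -/
def YImax [DecidableEq T] (N : PetriNet P T) (TI : Set T) (M : P → ℕ) :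
    Set (T → ℕ) :=
  {y | ∃ σ ∈ N.ImplMax TI M, ∀ u, σ.count u = y u}

end PetriNet

/-!
Along a firing sequence one maintains a basis marking `Mb` whose implicit reach contains the
current marking. An implicit transition just extends the implicit sequence `σ` leading from `Mb`.
For an explicit `t`, the sequence `σ` is an explanation of `t` at `Mb`, so it dominates a minimal
explanation `σm`; firing `σm t` from `Mb` gives the next basis marking, and the current marking
is reached from it by the residual vector `φ(σ) - φ(σm)`. That vector is realisable because in an
acyclic net a firing vector is firable as soon as the state equation yields a marking: some
transition of its support is a source of the support and therefore enabled. Only minimal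
explanations occur, so basis markings suffice, and they are minimax basis markings. Conversely,
every minimax step is realised by firing its explanation followed by `t`.
-/

namespace PetriNet

variable {P T : Type} {N : PetriNet P T}

/-- Meaningful only when `t` is enabled at `M`: the subtraction is truncated. -/
def fire (N : PetriNet P T) (M : P → ℕ) (t : T) : P → ℕ :=
  fun p => M p + N.Post p t - N.Pre p t

theorem Enabled.natCast_fire {M : P → ℕ} {t : T} (h : N.Enabled M t) (p : P) :
    (N.fire M t p : ℤ) = M p + N.C p t := by
  have := h p
  rw [fire, Nat.cast_sub (by omega), C]
  push_cast
  ring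

theorem fires_cons_iff {M M' : P → ℕ} {t : T} {σ : List T} :
    N.Fires M (t :: σ) M' ↔ N.Enabled M t ∧ N.Fires (N.fire M t) σ M' := by
  refine ⟨fun h => ?_, fun ⟨ht, hσ⟩ => .cons ht (fun _ => rfl) hσ⟩
  cases h with
  | cons ht hfire hσ =>
    obtain rfl : _ = N.fire M t := funext hfire
    exact ⟨ht, hσ⟩

theorem fires_singleton_iff {M M' : P → ℕ} {t : T} :
    N.Fires M [t] M' ↔ N.Enabled M t ∧ M' = N.fire M t := by
  rw [fires_cons_iff]
  constructor
  · rintro ⟨ht, ⟨⟩⟩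
    exact ⟨ht, rfl⟩
  · rintro ⟨ht, rfl⟩
    exact ⟨ht, .nil _⟩

theorem fires_append_iff {M M'' : P → ℕ} {σ τ : List T} :
    N.Fires M (σ ++ τ) M'' ↔ ∃ M', N.Fires M σ M' ∧ N.Fires M' τ M'' := by
  induction σ generalizing M with
  | nil => exact ⟨fun h => ⟨M, .nil M, h⟩, fun ⟨_, h₀, h⟩ => by cases h₀; exact h⟩
  | cons t σ ih =>
    simp only [List.cons_append, fires_cons_iff, ih]
    exact ⟨fun ⟨ht, M', hσ, hτ⟩ => ⟨M', ⟨ht, hσ⟩, hτ⟩,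
      fun ⟨M', ⟨ht, hσ⟩, hτ⟩ => ⟨ht, M', hσ, hτ⟩⟩

theorem Fires.append {M M' M'' : P → ℕ} {σ τ : List T} (hσ : N.Fires M σ M')
    (hτ : N.Fires M' τ M'') : N.Fires M (σ ++ τ) M'' :=
  fires_append_iff.2 ⟨M', hσ, hτ⟩

theorem count_cons_eq_add_single [DecidableEq T] (t u : T) (σ : List T) :
    (t :: σ).count u = σ.count u + (Pi.single t 1 : T → ℕ) u := by
  rw [List.count_cons, Pi.single_apply]
  by_cases h : u = t <;> simp [h, Ne.symm]

section StateEquation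

variable [Fintype T] [DecidableEq T]

theorem sum_C_mul_add_single (y : T → ℕ) (t : T) (p : P) :
    ∑ u, N.C p u * ((y u + (Pi.single t 1 : T → ℕ) u : ℕ) : ℤ) =
      ∑ u, N.C p u * y u + N.C p t := by
  simp [Pi.single_apply, mul_add, Finset.sum_add_distrib]

/-- The state equation `M' = M + C · φ(σ)`. -/
theorem Fires.natCast_eq {M M' : P → ℕ} {σ : List T} (h : N.Fires M σ M') (p : P) :
    (M' p : ℤ) = M p + ∑ u, N.C p u * σ.count u := by
  induction h with
  | nil => simp
  | @cons M M₁ M' t σ ht hM₁ _ ih =>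
    obtain rfl : M₁ = N.fire M t := funext hM₁
    simp only [ih, ht.natCast_fire, count_cons_eq_add_single, sum_C_mul_add_single]
    ring

end StateEquation

variable {TI : Set T}

theorem AcyclicOn.exists_source [Finite T] (hac : N.AcyclicOn TI) {S : Set T}
    (hS : S.Nonempty) (hSTI : S ⊆ TI) :
    ∃ t ∈ S, ∀ u ∈ S, ∀ p, 0 < N.Pre p t → N.Post p u = 0 := by
  let r : T → T → Prop := fun a b => Relation.TransGen (N.Arc TI) (.inr a) (.inr b)
  have : IsTrans T r := ⟨fun _ _ _ => Relation.TransGen.trans⟩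
  have : Std.Irrefl r := ⟨fun a => hac _⟩
  obtain ⟨t, ht, hmin⟩ := (Finite.wellFounded_of_trans_of_irrefl r).has_min S hS
  refine ⟨t, ht, fun u hu p hp => Nat.eq_zero_of_not_pos fun hpost => hmin u hu ?_⟩
  exact .head (show N.Arc TI (.inr u) (.inl p) from ⟨hSTI hu, hpost⟩)
    (.single (show N.Arc TI (.inl p) (.inr t) from ⟨hSTI ht, hp⟩))

/-- No transition of the support of `z` feeds an input place of `t`, so along `z` such a place
can only lose tokens, at least `Pre p t` of them. -/
theorem enabled_of_source [Fintype T] {z : T → ℕ} {t : T} (hzt : z t ≠ 0)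
    (hsource : ∀ u, z u ≠ 0 → ∀ p, 0 < N.Pre p t → N.Post p u = 0) {M M' : P → ℕ}
    (hM' : ∀ p, (M' p : ℤ) = M p + ∑ u, N.C p u * z u) : N.Enabled M t := by
  classical
  intro p
  rcases Nat.eq_zero_or_pos (N.Pre p t) with hp | hp
  · simp [hp]
  have hC : ∀ u, z u ≠ 0 → N.C p u = -N.Pre p u := fun u hu => by
    simp [C, hsource u hu p hp]
  have hrest : ∑ u ∈ Finset.univ.erase t, N.C p u * z u ≤ 0 :=
    Finset.sum_nonpos fun u _ => by
      by_cases hu : z u = 0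
      · simp [hu]
      · rw [hC u hu]
        exact mul_nonpos_of_nonpos_of_nonneg (by simp) (by positivity)
  have hzt' : (1 : ℤ) ≤ z t := by exact_mod_cast Nat.one_le_iff_ne_zero.2 hzt
  have hPre : (0 : ℤ) ≤ N.Pre p t := by positivity
  have := hM' p
  rw [← Finset.add_sum_erase _ _ (Finset.mem_univ t), hC t hzt] at this
  have : (N.Pre p t : ℤ) ≤ M p := by nlinarith
  exact_mod_cast this

theorem AcyclicOn.exists_fires [Fintype T] [DecidableEq T] (hac : N.AcyclicOn TI)
    {z : T → ℕ} (hz : ∀ u, z u ≠ 0 → u ∈ TI) {M M' : P → ℕ}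
    (hM' : ∀ p, (M' p : ℤ) = M p + ∑ u, N.C p u * z u) :
    ∃ σ : List T, (∀ u ∈ σ, u ∈ TI) ∧ N.Fires M σ M' := by
  induction hn : ∑ u, z u generalizing z M with
  | zero =>
    have hz0 : ∀ u, z u = 0 := by simpa using hn
    obtain rfl : M' = M := funext fun p => by simpa [hz0] using hM' p
    exact ⟨[], by simp, .nil _⟩
  | succ n ih =>
    obtain ⟨u₀, hu₀⟩ : ∃ u, z u ≠ 0 := by
      by_contra! h
      simp [h] at hn
    obtain ⟨t, htz, hsource⟩ :=
      hac.exists_source (S := {u | z u ≠ 0}) ⟨u₀, hu₀⟩ fun u hu => hz u hu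
    have ht : N.Enabled M t := enabled_of_source htz hsource hM'
    obtain ⟨z', rfl⟩ : ∃ z' : T → ℕ, z = fun u => z' u + (Pi.single t 1 : T → ℕ) u :=
      ⟨z - Pi.single t 1, funext fun u => by
        rw [Pi.sub_apply, Pi.single_apply]; split_ifs with h <;> simp_all; omega⟩
    have hn' : ∑ u, z' u = n := by
      simpa [Finset.sum_add_distrib] using hn
    have hz' : ∀ u, z' u ≠ 0 → u ∈ TI := fun u hu => hz u (by simp [hu])
    obtain ⟨σ, hσ, hfires⟩ := ih hz' (M := N.fire M t) (fun p => by
      rw [hM', sum_C_mul_add_single, ht.natCast_fire]; ring) hn'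
    refine ⟨t :: σ, ?_, fires_cons_iff.2 ⟨ht, hfires⟩⟩
    simp only [List.mem_cons, forall_eq_or_imp]
    exact ⟨hz t htz, hσ⟩

theorem mem_reach_of_mem_reachI {M0 Mb M : P → ℕ} (hMb : Mb ∈ N.Reach M0)
    (hM : M ∈ N.ReachI TI Mb) : M ∈ N.Reach M0 :=
  let ⟨σ₀, hσ₀⟩ := hMb
  let ⟨σ, _, hσ⟩ := hM
  ⟨σ₀ ++ σ, hσ₀.append hσ⟩

variable [Fintype T] [DecidableEq T] {TE : Set T} {M0 : P → ℕ}

theorem exists_mem_explMin_le {M : P → ℕ} {t : T} {σ : List T} (hσ : σ ∈ N.Expl TI M t) :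
    ∃ σm ∈ N.ExplMin TI M t, ∀ u, σm.count u ≤ σ.count u := by
  induction hn : ∑ u, σ.count u using Nat.strong_induction_on generalizing σ with
  | _ n ih =>
    by_cases hmin : σ ∈ N.ExplMin TI M t
    · exact ⟨σ, hmin, fun _ => le_rfl⟩
    obtain ⟨σ', hσ', hle, u, hne⟩ : ∃ σ' ∈ N.Expl TI M t,
        (∀ u, σ'.count u ≤ σ.count u) ∧ ∃ u, σ'.count u ≠ σ.count u := by
      simpa [ExplMin, hσ] using hmin
    have hlt : ∑ u, σ'.count u < n :=
      hn ▸ Finset.sum_lt_sum (fun u _ => hle u) ⟨u, Finset.mem_univ u, (hle u).lt_of_ne hne⟩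
    obtain ⟨σm, hσm, hle'⟩ := ih _ hlt hσ' rfl
    exact ⟨σm, hσm, fun u => (hle' u).trans (hle u)⟩

theorem fires_append_singleton_of_mem_expl {M M' : P → ℕ} {t : T} {σ : List T}
    (hσ : σ ∈ N.Expl TI M t)
    (hM' : ∀ p, (M' p : ℤ) = M p + ∑ u, N.C p u * σ.count u + N.C p t) :
    N.Fires M (σ ++ [t]) M' := by
  obtain ⟨-, M₁, hfires, ht⟩ := hσ
  obtain rfl : M' = N.fire M₁ t := funext fun p => by
    exact_mod_cast (hM' p).trans
      (by rw [Enabled.natCast_fire ht, hfires.natCast_eq] : _ = ((N.fire M₁ t p : ℕ) : ℤ))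
  exact hfires.append (fires_singleton_iff.2 ⟨ht, rfl⟩)

theorem Minimax.mem_reach {Mb : P → ℕ} (h : N.Minimax TE TI M0 Mb) : Mb ∈ N.Reach M0 := by
  induction h with
  | base => exact ⟨[], .nil _⟩
  | @step M M' t y _ _ hy hM' ih =>
    obtain ⟨σ₀, hσ₀⟩ := ih
    obtain ⟨σ, hσ, hcount⟩ : ∃ σ ∈ N.Expl TI M t, ∀ u, σ.count u = y u := by
      rcases hy with ⟨σ, hσ, hc⟩ | ⟨σ, hσ, hc⟩ <;> exact ⟨σ, hσ.1, hc⟩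
    exact ⟨σ₀ ++ (σ ++ [t]),
      hσ₀.append (fires_append_singleton_of_mem_expl hσ (by simpa [hcount] using hM'))⟩

theorem Basis.minimax {Mb : P → ℕ} (h : N.Basis TE TI M0 Mb) : N.Minimax TE TI M0 Mb := by
  induction h with
  | base => exact .base
  | step _ ht hy hM' ih => exact ih.step ht (.inl hy) hM'

theorem Basis.exists_basis_fire_mem_reachI (hbp : N.IsBasisPartition TE TI) {Mb M : P → ℕ}
    {t : T} (hMb : N.Basis TE TI M0 Mb) (hM : M ∈ N.ReachI TI Mb) (ht : N.Enabled M t) :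
    ∃ Mb', N.Basis TE TI M0 Mb' ∧ N.fire M t ∈ N.ReachI TI Mb' := by
  obtain ⟨σ, hσTI, hσ⟩ := hM
  by_cases htI : t ∈ TI
  · refine ⟨Mb, hMb, σ ++ [t], ?_, hσ.append (fires_singleton_iff.2 ⟨ht, rfl⟩)⟩
    simpa [or_imp, forall_and, htI] using hσTI
  have htE : t ∈ TE := (hbp.1 t).2 htI
  have hexpl : σ ∈ N.Expl TI Mb t := ⟨hσTI, M, hσ, ht⟩
  obtain ⟨σm, hσm, hle⟩ := exists_mem_explMin_le hexpl
  obtain ⟨-, M₁, hσm_fires, ht₁⟩ := hσm.1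
  refine ⟨N.fire M₁ t, hMb.step htE ⟨σm, hσm, fun _ => rfl⟩ fun p => ?_, ?_⟩
  · rw [Enabled.natCast_fire ht₁, hσm_fires.natCast_eq]
  refine hbp.2.exists_fires (z := fun u => σ.count u - σm.count u)
    (fun u hu => hσTI u (List.count_pos_iff.1 (by omega))) fun p => ?_
  rw [Enabled.natCast_fire ht, hσ.natCast_eq, Enabled.natCast_fire ht₁, hσm_fires.natCast_eq]
  simp only [Nat.cast_sub (hle _), mul_sub, Finset.sum_sub_distrib]
  ring

theorem exists_basis_of_mem_reach (hbp : N.IsBasisPartition TE TI) {M : P → ℕ}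
    (hM : M ∈ N.Reach M0) : ∃ Mb, N.Basis TE TI M0 Mb ∧ M ∈ N.ReachI TI Mb := by
  obtain ⟨σ, hσ⟩ := hM
  induction σ using List.reverseRecOn generalizing M with
  | nil =>
    cases hσ
    exact ⟨M0, .base, [], by simp, .nil _⟩
  | append_singleton σ t ih =>
    obtain ⟨M₁, hσ₁, ht₁⟩ := fires_append_iff.1 hσ
    obtain ⟨ht, rfl⟩ := fires_singleton_iff.1 ht₁
    obtain ⟨Mb, hMb, hM₁⟩ := ih hσ₁
    exact hMb.exists_basis_fire_mem_reachI hbp hM₁ ht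

end PetriNet

open PetriNet in
/-- A marking is reachable iff it is in the implicit reach of
some minimax basis marking. -/
theorem statement3 {P T : Type} [Fintype T] [DecidableEq T]
    (N : PetriNet P T) (M0 : P → ℕ) (TE TI : Set T)
    (hbp : N.IsBasisPartition TE TI) (M : P → ℕ) :
    M ∈ N.Reach M0 ↔
      ∃ Mb : P → ℕ, N.Minimax TE TI M0 Mb ∧ M ∈ N.ReachI TI Mb := by
  constructor
  · intro hM
    obtain ⟨Mb, hMb, hM⟩ := exists_basis_of_mem_reach hbp hM
    exact ⟨Mb, hMb.minimax, hM⟩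
  · rintro ⟨Mb, hMb, hM⟩
    exact mem_reach_of_mem_reachI hMb.mem_reach hM
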